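/- In the reduction graph H built from a Planar (≤3,3)-SAT formula φ with m clauses, if H has an edge g-colouring using at least m+1 distinct colours then φ has a satisfying assignment. -/

import Mathlib

open Finset

variable {V : Type*}

/-- The set of colours appearing on edges incident to vertex `v`. -/
def vColors (G : SimpleGraph V) (f : V → V → ℕ) (v : V) : Set ℕ :=
  {c | ∃ u, G.Adj v u ∧ f v u = c}

/-- The set of colours used on edges of `G`. -/
def colorsOf (G : SimpleGraph V) (f : V → V → ℕ) : Set ℕ :=
  {c | ∃ u v, G.Adj u v ∧ f u v = c}

/-- An edge `q`-colouring: a symmetric assignment of colours to edges such that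
every vertex is incident with at most `q` distinct colours. -/
def IsEdgeQColoring (G : SimpleGraph V) (q : ℕ) (f : V → V → ℕ) : Prop :=
  (∀ u v, f u v = f v u) ∧ ∀ v, (vColors G f v).ncard ≤ q

/-- `S`-composability: every vertex of `S` sees at most `q - 1` non-zero colours. -/
def IsComposable (G : SimpleGraph V) (q : ℕ) (S : Set V) (f : V → V → ℕ) : Prop :=
  ∀ v ∈ S, ((vColors G f v) \ {0}).ncard ≤ q - 1

/-- `χ'_q(G, S)`: maximum number of non-zero colours of an `S`-composable edge
`q`-colouring of `G`. -/
noncomputable def chiq (G : SimpleGraph V) (q : ℕ) (S : Set V) : ℕ :=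
  sSup {k | ∃ f, IsEdgeQColoring G q f ∧ IsComposable G q S f ∧
    ((colorsOf G f) \ {0}).ncard = k}

/-- `χ'_q(G)`: maximum number of distinct colours of an edge `q`-colouring of `G`. -/
noncomputable def chimax (G : SimpleGraph V) (q : ℕ) : ℕ :=
  sSup {k | ∃ f, IsEdgeQColoring G q f ∧ (colorsOf G f).ncard = k}

/-- `M` is a matching in `G`: a set of edges, pairwise not sharing a vertex. -/
def IsMatchingSet (G : SimpleGraph V) (M : Set (Sym2 V)) : Prop :=
  M ⊆ G.edgeSet ∧ ∀ e ∈ M, ∀ e' ∈ M, e ≠ e' → ∀ v, v ∈ e → v ∉ e'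

/-- `M` is a maximal matching in `G`. -/
def IsMaximalMatchingSet (G : SimpleGraph V) (M : Set (Sym2 V)) : Prop :=
  IsMatchingSet G M ∧ ∀ e ∈ G.edgeSet, ∃ e' ∈ M, ∃ v, v ∈ e ∧ v ∈ e'

/-- `X` is a vertex cover of `G`. -/
def IsVertexCover (G : SimpleGraph V) (X : Set V) : Prop :=
  ∀ e ∈ G.edgeSet, ∃ v ∈ X, v ∈ e

/-- A layering of `G`. -/
def IsLayering (G : SimpleGraph V) (lam : V → ℤ) : Prop :=
  ∀ u v, G.Adj u v → |lam u - lam v| ≤ 1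

/-- The graph part `G_m` of the `(λ, r, m)`-stratification: delete all edges `uv`
with `λ(u) ≡ m` and `λ(v) ≡ m + 1 (mod r)`. -/
def stratGraph (G : SimpleGraph V) (lam : V → ℤ) (r m : ℤ) : SimpleGraph V where
  Adj u v := G.Adj u v ∧
    ¬ ((lam u ≡ m [ZMOD r] ∧ lam v ≡ m + 1 [ZMOD r]) ∨
       (lam v ≡ m [ZMOD r] ∧ lam u ≡ m + 1 [ZMOD r]))
  symm := by
    constructor
    intro u v h
    exact ⟨h.1.symm, fun hc => h.2 hc.symm⟩
  loopless := ⟨fun v h => G.loopless.irrefl v h.1⟩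

/-- The set `S_m` of the `(λ, r, m)`-stratification: vertices incident with deleted
edges. -/
def stratSet (G : SimpleGraph V) (lam : V → ℤ) (r m : ℤ) : Set V :=
  {v | ∃ u, G.Adj v u ∧ ¬ (stratGraph G lam r m).Adj v u}
/-- An edge `g`-colouring for a per-vertex bound `g`. -/
def IsEdgeGColoring (G : SimpleGraph V) (g : V → ℕ) (f : V → V → ℕ) : Prop :=
  (∀ u v, f u v = f v u) ∧ ∀ v, (vColors G f v).ncard ≤ g v

/-- Vertices of the reduction graph `H`: clause vertices `c_i`, variable copies
`x_{j,a}`, conflict vertices `n_{j,a,b}`, and the apex vertex `u`. -/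
inductive HV (n m : ℕ) where
  | clause (i : Fin m)
  | varc (j : Fin n) (a : Fin 3)
  | confl (j : Fin n) (a b : Fin 3)
  | apex
  deriving DecidableEq

/-- The reduction graph `H` built from a `(≤3,3)`-SAT formula with `m` clauses
and `n` variables, where variable `j` occurs in clause `occ j a` with sign
`sgn j a` for `a ∈ {0,1,2}`.  Variable copy `x_{j,a}` is joined to its clause;
conflict vertex `n_{j,a,b}` (for `a < b`) is joined to `x_{j,a}` and `x_{j,b}`
iff the two occurrences have opposite signs; the apex `u` is joined to every
clause vertex and every conflict vertex. -/
def satGraph (n m : ℕ) (occ : Fin n → Fin 3 → Fin m) (sgn : Fin n → Fin 3 → Bool) :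
    SimpleGraph (HV n m) :=
  SimpleGraph.fromRel (fun x y =>
    match x, y with
    | HV.clause i, HV.varc j a => occ j a = i
    | HV.varc j' a', HV.confl j a b =>
        j = j' ∧ a < b ∧ (a' = a ∨ a' = b) ∧ sgn j a ≠ sgn j b
    | HV.apex, HV.clause _ => True
    | HV.apex, HV.confl _ a b => a < b
    | _, _ => False)

/-- The per-vertex colour bound `g` of the reduction: `g(u) = 1`, `g(c_i) = 2`,
`g(x_{j,a}) = 1`, `g(n_{j,a,b}) = 2`. -/
def satBound (n m : ℕ) : HV n m → ℕ
  | HV.clause _ => 2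
  | HV.varc _ _ => 1
  | HV.confl _ _ _ => 2
  | HV.apex => 1

/-! All edges at the apex `u` share one colour `z`, and all edges at a variable copy `x_{j,a}` share
one colour, so every colour other than `z` appears at some clause vertex, which (having `g = 2`
and an edge to `u`) sees at most one colour besides `z`. With at least `m + 1` colours the
clauses therefore carry `m` pairwise distinct colours other than `z`, each coming from a
variable copy. Two copies of one variable with opposite signs cannot both avoid `z`: their
conflict vertex also sees `z`, so `g = 2` forces their colours to agree, and then two distinct
clauses would share their colour. Hence the signs of the copies not coloured `z` define a
consistent assignment, and it satisfies every clause. -/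

theorem exists_injective_eq_singleton_of_card_le_ncard_iUnion {ι α : Type*} [Finite ι]
    {R : ι → Set α} (hR : ∀ i, (R i).Subsingleton) (hcard : Nat.card ι ≤ (⋃ i, R i).ncard) :
    ∃ d : ι → α, Function.Injective d ∧ ∀ i, R i = {d i} := by
  obtain hι | hι := isEmpty_or_nonempty ι
  · exact ⟨isEmptyElim, fun i => isEmptyElim i, fun i => isEmptyElim i⟩
  obtain ⟨c₀, -⟩ := Set.nonempty_of_ncard_ne_zero (s := ⋃ i, R i) (by
    have := Nat.card_pos (α := ι); omega)
  have : Nonempty α := ⟨c₀⟩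
  let d : ι → α := fun i => Classical.epsilon (· ∈ R i)
  let N : Set ι := {i | (R i).Nonempty}
  have hdR : ∀ i ∈ N, d i ∈ R i := fun i hi => Classical.epsilon_spec hi
  have hUnion : (⋃ i, R i) ⊆ d '' N :=
    Set.iUnion_subset fun i c hc => ⟨i, ⟨c, hc⟩, hR i (hdR i ⟨c, hc⟩) hc⟩
  have hN_le : N.ncard ≤ Nat.card ι := Set.ncard_univ ι ▸ Set.ncard_le_ncard N.subset_univ
  have hle := Set.ncard_le_ncard hUnion (N.toFinite.image d)
  have himage := Set.ncard_image_le (f := d) N.toFinite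
  have hN : N = Set.univ :=
    Set.eq_of_subset_of_ncard_le N.subset_univ (by rw [Set.ncard_univ]; omega)
  have hinj : Set.InjOn d N := Set.injOn_of_ncard_image_eq (by omega)
  rw [hN, Set.injOn_univ] at hinj
  exact ⟨d, hinj, fun i => (hR i).eq_singleton_of_mem (hdR i (hN ▸ Set.mem_univ i))⟩

theorem exists_forall_eq_of_consistent {ι κ : Type*} {P : ι → κ → Prop} {s : ι → κ → Bool}
    (h : ∀ j a b, P j a → P j b → s j a = s j b) :
    ∃ σ : ι → Bool, ∀ j a, P j a → s j a = σ j := by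
  refine ⟨fun j => Classical.epsilon fun b => ∃ a, P j a ∧ s j a = b, fun j a ha => ?_⟩
  obtain ⟨b, hb, hbσ⟩ :=
    Classical.epsilon_spec (p := fun b => ∃ a, P j a ∧ s j a = b) ⟨_, a, ha, rfl⟩
  exact (h j a b ha hb).trans hbσ

theorem vColors_finite [Finite V] (G : SimpleGraph V) (f : V → V → ℕ) (v : V) :
    (vColors G f v).Finite :=
  (Set.finite_range (f v)).subset fun _ ⟨u, _, hu⟩ => ⟨u, hu⟩

section EdgeGColoring

variable {G : SimpleGraph V} {g : V → ℕ} {f : V → V → ℕ}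

theorem mem_vColors_of_adj {v u : V} (h : G.Adj v u) : f v u ∈ vColors G f v := ⟨u, h, rfl⟩

namespace IsEdgeGColoring

variable [Finite V] (hf : IsEdgeGColoring G g f)
include hf

theorem vColors_subsingleton {v : V} (hv : g v ≤ 1) : (vColors G f v).Subsingleton :=
  (Set.ncard_le_one (vColors_finite G f v)).1 ((hf.2 v).trans hv)

theorem eq_of_adj {v u w : V} (hv : g v ≤ 1) (hu : G.Adj v u) (hw : G.Adj v w) :
    f v u = f v w :=
  hf.vColors_subsingleton hv (mem_vColors_of_adj hu) (mem_vColors_of_adj hw)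

theorem exists_forall_adj_eq {v : V} (hv : g v ≤ 1) : ∃ z, ∀ u, G.Adj v u → f v u = z := by
  by_cases h : ∃ w, G.Adj v w
  · obtain ⟨w, hw⟩ := h
    exact ⟨f v w, fun u hu => hf.eq_of_adj hv hu hw⟩
  · exact ⟨0, fun u hu => (h ⟨u, hu⟩).elim⟩

theorem vColors_sdiff_subsingleton {v : V} {z : ℕ} (hv : g v ≤ 2) (hz : z ∈ vColors G f v) :
    (vColors G f v \ {z}).Subsingleton := by
  refine (Set.ncard_le_one ((vColors_finite G f v).sdiff)).1 ?_
  have := hf.2 v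
  rw [Set.ncard_sdiff_singleton_of_mem hz]
  omega

end IsEdgeGColoring

end EdgeGColoring

instance (n m : ℕ) : Finite (HV n m) :=
  Finite.of_surjective
    (Sum.elim HV.clause <| Sum.elim (fun p : Fin n × Fin 3 => HV.varc p.1 p.2) <|
      Sum.elim (fun p : Fin n × Fin 3 × Fin 3 => HV.confl p.1 p.2.1 p.2.2) fun _ : Unit => HV.apex)
    (by
      rintro (i | ⟨j, a⟩ | ⟨j, a, b⟩ | _)
      exacts [⟨.inl i, rfl⟩, ⟨.inr (.inl (j, a)), rfl⟩, ⟨.inr (.inr (.inl (j, a, b))), rfl⟩,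
        ⟨.inr (.inr (.inr ())), rfl⟩])

section Reduction

variable {n m : ℕ} {occ : Fin n → Fin 3 → Fin m} {sgn : Fin n → Fin 3 → Bool}

theorem satGraph_adj_apex_clause (i : Fin m) : (satGraph n m occ sgn).Adj .apex (.clause i) := by
  simp [satGraph]

theorem satGraph_adj_varc_clause (j : Fin n) (a : Fin 3) :
    (satGraph n m occ sgn).Adj (.varc j a) (.clause (occ j a)) := by
  simp [satGraph]

theorem satGraph_adj_apex_confl {j : Fin n} {a b : Fin 3} (hab : a < b) :
    (satGraph n m occ sgn).Adj .apex (.confl j a b) := by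
  simp [satGraph, hab]

theorem satGraph_adj_varc_confl_left {j : Fin n} {a b : Fin 3} (hab : a < b)
    (hs : sgn j a ≠ sgn j b) : (satGraph n m occ sgn).Adj (.varc j a) (.confl j a b) := by
  simp [satGraph, hab, hs]

theorem satGraph_adj_varc_confl_right {j : Fin n} {a b : Fin 3} (hab : a < b)
    (hs : sgn j a ≠ sgn j b) : (satGraph n m occ sgn).Adj (.varc j b) (.confl j a b) := by
  simp [satGraph, hab, hs]

theorem satGraph_adj_clause {i : Fin m} {u : HV n m}
    (h : (satGraph n m occ sgn).Adj (.clause i) u) :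
    u = .apex ∨ ∃ j a, u = .varc j a ∧ occ j a = i := by
  cases u <;> simp_all [satGraph]

theorem satGraph_adj_cases {u v : HV n m} (h : (satGraph n m occ sgn).Adj u v) :
    (u = .apex ∨ ∃ j a, u = .varc j a) ∨ (v = .apex ∨ ∃ j a, v = .varc j a) := by
  cases u <;> cases v <;> simp_all [satGraph]

def varColor (occ : Fin n → Fin 3 → Fin m) (f : HV n m → HV n m → ℕ) (j : Fin n) (a : Fin 3) :
    ℕ :=
  f (.varc j a) (.clause (occ j a))

variable {f : HV n m → HV n m → ℕ} (hf : IsEdgeGColoring (satGraph n m occ sgn) (satBound n m) f)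
  {z : ℕ} (hz : ∀ v, (satGraph n m occ sgn).Adj .apex v → f .apex v = z)
include hf

theorem eq_varColor_of_adj {j : Fin n} {a : Fin 3} {w : HV n m}
    (h : (satGraph n m occ sgn).Adj (.varc j a) w) :
    f (.varc j a) w = varColor occ f j a :=
  hf.eq_of_adj le_rfl h (satGraph_adj_varc_clause j a)

theorem varColor_mem_vColors_clause (j : Fin n) (a : Fin 3) :
    varColor occ f j a ∈ vColors (satGraph n m occ sgn) f (.clause (occ j a)) :=
  ⟨.varc j a, (satGraph_adj_varc_clause j a).symm, hf.1 _ _⟩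

include hz

theorem apex_color_mem_vColors {v : HV n m} (h : (satGraph n m occ sgn).Adj .apex v) :
    z ∈ vColors (satGraph n m occ sgn) f v :=
  ⟨.apex, h.symm, (hf.1 _ _).trans (hz v h)⟩

theorem clause_vColors_sdiff_subsingleton (i : Fin m) :
    (vColors (satGraph n m occ sgn) f (.clause i) \ {z}).Subsingleton :=
  hf.vColors_sdiff_subsingleton le_rfl (apex_color_mem_vColors hf hz (satGraph_adj_apex_clause i))

theorem colorsOf_sdiff_subset_iUnion :
    colorsOf (satGraph n m occ sgn) f \ {z} ⊆
      ⋃ i, vColors (satGraph n m occ sgn) f (.clause i) \ {z} := by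
  have key : ∀ u v, (satGraph n m occ sgn).Adj u v → (u = .apex ∨ ∃ j a, u = .varc j a) →
      f u v ≠ z → f u v ∈ ⋃ i, vColors (satGraph n m occ sgn) f (.clause i) \ {z} := by
    rintro u v huv (rfl | ⟨j, a, rfl⟩) hne
    · exact (hne (hz v huv)).elim
    · rw [eq_varColor_of_adj hf huv] at hne ⊢
      exact Set.mem_iUnion.2 ⟨occ j a, varColor_mem_vColors_clause hf j a, hne⟩
  rintro _ ⟨⟨u, v, huv, rfl⟩, hne⟩
  rcases satGraph_adj_cases huv with hu | hv
  · exact key u v huv hu hne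
  · rw [hf.1] at hne ⊢
    exact key v u huv.symm hv hne

theorem card_le_ncard_iUnion_clause_vColors_sdiff
    (hcard : m + 1 ≤ (colorsOf (satGraph n m occ sgn) f).ncard) :
    Nat.card (Fin m) ≤ (⋃ i, vColors (satGraph n m occ sgn) f (.clause i) \ {z}).ncard := by
  have hsdiff := Set.ncard_le_ncard_sdiff_add_ncard (colorsOf (satGraph n m occ sgn) f) {z}
  have hunion := Set.ncard_le_ncard (colorsOf_sdiff_subset_iUnion hf hz)
    (Set.finite_iUnion fun i => (clause_vColors_sdiff_subsingleton hf hz i).finite)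
  rw [Set.ncard_singleton] at hsdiff
  rw [Nat.card_eq_fintype_card, Fintype.card_fin]
  omega

theorem exists_varColor_eq_of_mem_vColors_clause {i : Fin m} {c : ℕ}
    (hc : c ∈ vColors (satGraph n m occ sgn) f (.clause i)) (hcz : c ≠ z) :
    ∃ j a, occ j a = i ∧ varColor occ f j a = c := by
  obtain ⟨u, hu, rfl⟩ := hc
  rcases satGraph_adj_clause hu with rfl | ⟨j, a, rfl, rfl⟩
  · exact (hcz ((hf.1 _ _).trans (hz _ hu.symm))).elim
  · exact ⟨j, a, rfl, hf.1 _ _⟩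

/-- The conflict vertex `n_{j,a,b}` sees `z` and both variable colours, but has `g = 2`. -/
theorem varColor_eq_of_sgn_ne {j : Fin n} {a b : Fin 3} (hab : a < b) (hs : sgn j a ≠ sgn j b)
    (ha : varColor occ f j a ≠ z) (hb : varColor occ f j b ≠ z) :
    varColor occ f j a = varColor occ f j b := by
  have hsub := hf.vColors_sdiff_subsingleton (v := .confl j a b) le_rfl
    (apex_color_mem_vColors hf hz (satGraph_adj_apex_confl hab))
  have hmem : ∀ {c : Fin 3}, (satGraph n m occ sgn).Adj (.varc j c) (.confl j a b) →
      varColor occ f j c ∈ vColors (satGraph n m occ sgn) f (.confl j a b) :=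
    fun h => eq_varColor_of_adj hf h ▸ hf.1 _ _ ▸ mem_vColors_of_adj h.symm
  exact hsub ⟨hmem (satGraph_adj_varc_confl_left hab hs), ha⟩
    ⟨hmem (satGraph_adj_varc_confl_right hab hs), hb⟩

theorem sgn_eq_of_varColor_ne {j : Fin n} {a b : Fin 3}
    (hinj : ∀ a b, varColor occ f j a ≠ z → varColor occ f j a = varColor occ f j b → a = b)
    (ha : varColor occ f j a ≠ z) (hb : varColor occ f j b ≠ z) :
    sgn j a = sgn j b := by
  by_contra hs
  rcases lt_or_gt_of_ne (fun hab : a = b => hs (hab ▸ rfl)) with hab | hab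
  · exact hab.ne (hinj a b ha (varColor_eq_of_sgn_ne hf hz hab hs ha hb))
  · exact hab.ne (hinj b a hb (varColor_eq_of_sgn_ne hf hz hab (Ne.symm hs) hb ha))

end Reduction

/-- if `H` has an edge `g`-colouring using at least `m + 1`
distinct colours, then the formula has a satisfying assignment. -/
theorem stmt17 (n m : ℕ)
    (occ : Fin n → Fin 3 → Fin m) (sgn : Fin n → Fin 3 → Bool)
    (hocc : ∀ j, Function.Injective (occ j))
    (hcol : ∃ f : HV n m → HV n m → ℕ,
      IsEdgeGColoring (satGraph n m occ sgn) (satBound n m) f ∧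
      m + 1 ≤ (colorsOf (satGraph n m occ sgn) f).ncard) :
    ∃ σ : Fin n → Bool, ∀ i : Fin m, ∃ j a, occ j a = i ∧ sgn j a = σ j := by
  obtain ⟨f, hf, hcard⟩ := hcol
  obtain ⟨z, hz⟩ := hf.exists_forall_adj_eq (v := .apex) le_rfl
  obtain ⟨d, hd, hRd⟩ := exists_injective_eq_singleton_of_card_le_ncard_iUnion
    (clause_vColors_sdiff_subsingleton hf hz)
    (card_le_ncard_iUnion_clause_vColors_sdiff hf hz hcard)
  have hvar : ∀ j a, varColor occ f j a ≠ z → varColor occ f j a = d (occ j a) :=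
    fun j a ha => (hRd _).subset ⟨varColor_mem_vColors_clause hf j a, ha⟩
  obtain ⟨σ, hσ⟩ := exists_forall_eq_of_consistent (s := sgn) fun j a b =>
    sgn_eq_of_varColor_ne hf hz fun a b ha hab =>
      hocc j (hd ((hvar j a ha).symm.trans (hab.trans (hvar j b (hab ▸ ha)))))
  refine ⟨σ, fun i => ?_⟩
  have hdi : d i ∈ vColors (satGraph n m occ sgn) f (.clause i) \ {z} := (hRd i).symm ▸ rfl
  obtain ⟨j, a, rfl, hja⟩ := exists_varColor_eq_of_mem_vColors_clause hf hz hdi.1 hdi.2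
  exact ⟨j, a, rfl, hσ j a (hja ▸ hdi.2)⟩
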